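/- arXiv:2501.17566 — 2 statements merged into one kernel-verified Lean document; each statement's English description precedes it below -/
import Mathlib

section
/- Let p > 1. Then lim_{n→∞} n^{−1/p} ‖T_n‖_p = 2^{1/p} [(2^p − 1) ζ(p)]^{1/p}, and consequently for every n ≥ 1 one has 2 ≤ n^{−1/p} ‖T_n‖_p < 2^{1/p} [(2^p − 1) ζ(p)]^{1/p}. -/
open Finset Real Filter

/-- The n×n Cauchy–Toeplitz matrix `T_n = [2/(1+2(i-j))]`. -/
noncomputable def cauchyToeplitz (n : ℕ) : Matrix (Fin n) (Fin n) ℝ :=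
  fun i j => 2 / (1 + 2 * (((i : ℕ) : ℝ) - ((j : ℕ) : ℝ)))

/-- The ℓ_p norm of `T_n`: `(∑_{i,j} |a_{ij}|^p)^(1/p)`. -/
noncomputable def lpNorm (n : ℕ) (p : ℝ) : ℝ :=
  (∑ i : Fin n, ∑ j : Fin n, |cauchyToeplitz n i j| ^ p) ^ (1 / p)

/-- The ℓ_{p,q} norm of `T_n`: `(∑_j (∑_i |a_{ij}|^p)^(q/p))^(1/q)`. -/
noncomputable def lpqNorm (n : ℕ) (p q : ℝ) : ℝ :=
  (∑ j : Fin n, (∑ i : Fin n, |cauchyToeplitz n i j| ^ p) ^ (q / p)) ^ (1 / q)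

/-- The Riemann zeta function at a real argument (real-valued for real `p > 1`). -/
noncomputable def zetaR (p : ℝ) : ℝ := (riemannZeta p).re

/-!
Writing `|1 + 2(i - j)| = 2d + 1` with `d : ℕ`, each entry has `|(T_n)_{ij}|^p = c_d`, where
`c_d = (2/(2d+1))^p`. Enlarging `T_n` to `T_{n+1}` adds a column and a row whose `p`-th powers sum
to the partial sums `s_n` and `s_{n+1}` of `∑ c_d`, so `‖T_n‖_p^p / n` is the Cesàro mean of
`s_k + s_{k+1}`. These increase strictly to `2 ∑ c_d = 2 (2^p - 1) ζ(p)`, since `∑ c_d` is `2^p`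
times the sum of the odd terms of the series for `ζ(p)`; and `s_k + s_{k+1} ≥ c_0 = 2^p` gives
the lower bound.
-/

open Topology
open scoped BigOperators

def oddIndex (i j : ℕ) : ℕ := if j ≤ i then i - j else j - i - 1

lemma two_mul_oddIndex_add_one (i j : ℕ) :
    2 * (oddIndex i j : ℝ) + 1 = |1 + 2 * ((i : ℝ) - j)| := by
  unfold oddIndex
  split_ifs with h
  · have hji : (j : ℝ) ≤ i := by exact_mod_cast h
    rw [Nat.cast_sub h, abs_of_nonneg (by linarith)]
    ring
  · have hij : (i : ℝ) + 1 ≤ j := by exact_mod_cast (not_le.mp h)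
    rw [Nat.cast_sub (by omega), Nat.cast_sub (by omega), abs_of_neg (by linarith)]
    push_cast
    ring

lemma sum_range_sum_range_oddIndex {M : Type*} [AddCommMonoid M] (f : ℕ → M) (n : ℕ) :
    ∑ i ∈ range n, ∑ j ∈ range n, f (oddIndex i j) =
      ∑ k ∈ range n, (∑ d ∈ range k, f d + ∑ d ∈ range (k + 1), f d) := by
  induction n with
  | zero => simp
  | succ n ih =>
    have hcolumn : ∑ i ∈ range n, f (oddIndex i n) = ∑ d ∈ range n, f d := by
      refine (sum_congr rfl fun i hi => ?_).trans (sum_range_reflect f n)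
      rw [mem_range] at hi
      rw [oddIndex, if_neg (by omega)]
      congr 1
      omega
    have hrow : ∑ j ∈ range (n + 1), f (oddIndex n j) = ∑ d ∈ range (n + 1), f d := by
      refine (sum_congr rfl fun j hj => ?_).trans (sum_range_reflect f (n + 1))
      rw [mem_range] at hj
      rw [oddIndex, if_pos (by omega), Nat.add_sub_cancel]
    rw [sum_range_succ, sum_congr rfl fun i _ => sum_range_succ _ n, sum_add_distrib, ih, hcolumn,
      hrow, sum_range_succ (fun k => ∑ d ∈ range k, f d + ∑ d ∈ range (k + 1), f d) n, add_assoc]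

lemma abs_cauchyToeplitz {n : ℕ} (i j : Fin n) :
    |cauchyToeplitz n i j| = 2 / (2 * (oddIndex i j : ℝ) + 1) := by
  rw [cauchyToeplitz, abs_div, abs_two, two_mul_oddIndex_add_one]

noncomputable def cauchyWeight (p : ℝ) (d : ℕ) : ℝ := (2 / (2 * d + 1)) ^ p

lemma cauchyWeight_pos (p : ℝ) (d : ℕ) : 0 < cauchyWeight p d := by
  unfold cauchyWeight
  positivity

lemma cauchyWeight_zero (p : ℝ) : cauchyWeight p 0 = 2 ^ p := by
  simp [cauchyWeight]

lemma sum_rpow_abs_cauchyToeplitz (p : ℝ) (n : ℕ) :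
    ∑ i : Fin n, ∑ j : Fin n, |cauchyToeplitz n i j| ^ p = ∑ k ∈ range n,
      (∑ d ∈ range k, cauchyWeight p d + ∑ d ∈ range (k + 1), cauchyWeight p d) := by
  rw [← sum_range_sum_range_oddIndex, ← Fin.sum_univ_eq_sum_range]
  refine sum_congr rfl fun i _ => ?_
  rw [← Fin.sum_univ_eq_sum_range]
  refine sum_congr rfl fun j _ => ?_
  rw [abs_cauchyToeplitz, cauchyWeight]

lemma rpow_neg_one_div_mul_lpNorm (p : ℝ) (n : ℕ) :
    (n : ℝ) ^ (-(1 / p)) * lpNorm n p = (𝔼 k ∈ range n,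
      (∑ d ∈ range k, cauchyWeight p d + ∑ d ∈ range (k + 1), cauchyWeight p d)) ^ (1 / p) := by
  have hsum : 0 ≤ ∑ i : Fin n, ∑ j : Fin n, |cauchyToeplitz n i j| ^ p := by positivity
  rw [lpNorm, expect_eq_sum_div_card, card_range, ← sum_rpow_abs_cauchyToeplitz,
    div_rpow hsum n.cast_nonneg, rpow_neg n.cast_nonneg, inv_mul_eq_div]

lemma hasSum_zetaR {p : ℝ} (hp : 1 < p) : HasSum (fun n : ℕ => 1 / (n : ℝ) ^ p) (zetaR p) := by
  have hterm : ∀ n : ℕ, 1 / (n : ℂ) ^ (p : ℂ) = ((1 / (n : ℝ) ^ p : ℝ) : ℂ) := fun n => by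
    rw [Complex.ofReal_div, Complex.ofReal_one, Complex.ofReal_cpow n.cast_nonneg,
      Complex.ofReal_natCast]
  refine (Real.summable_one_div_nat_rpow.mpr hp).hasSum_iff.mpr ?_
  rw [zetaR, zeta_eq_tsum_one_div_nat_cpow (by simpa using hp), tsum_congr hterm,
    ← Complex.ofReal_tsum, Complex.ofReal_re]

lemma hasSum_one_div_two_mul_add_one_rpow {p : ℝ} (hp : 1 < p) :
    HasSum (fun k : ℕ => 1 / (2 * k + 1 : ℝ) ^ p) ((1 - 2 ^ (-p)) * zetaR p) := by
  have hζ := hasSum_zetaR hp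
  have heven : HasSum (fun k : ℕ => 1 / ((2 * k : ℕ) : ℝ) ^ p) (2 ^ (-p) * zetaR p) := by
    have hterm : (fun k : ℕ => 1 / ((2 * k : ℕ) : ℝ) ^ p) =
        fun k : ℕ => 2 ^ (-p) * (1 / (k : ℝ) ^ p) := by
      funext k
      rw [Nat.cast_mul, Nat.cast_two, mul_rpow two_pos.le k.cast_nonneg, rpow_neg two_pos.le,
        one_div, one_div, mul_inv]
    rw [hterm]
    exact hζ.mul_left _
  have hodd : Summable (fun k : ℕ => 1 / ((2 * k + 1 : ℕ) : ℝ) ^ p) :=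
    hζ.summable.comp_injective fun a b h => by simpa using h
  have hsplit :=
    (HasSum.even_add_odd (f := fun n : ℕ => 1 / (n : ℝ) ^ p) heven hodd.hasSum).unique hζ
  rw [show (1 - 2 ^ (-p)) * zetaR p = ∑' k : ℕ, 1 / ((2 * k + 1 : ℕ) : ℝ) ^ p by linarith]
  exact_mod_cast hodd.hasSum

lemma hasSum_cauchyWeight {p : ℝ} (hp : 1 < p) :
    HasSum (cauchyWeight p) ((2 ^ p - 1) * zetaR p) := by
  have hterm : cauchyWeight p = fun d : ℕ => 2 ^ p * (1 / (2 * d + 1 : ℝ) ^ p) := by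
    funext d
    rw [cauchyWeight, div_rpow two_pos.le (by positivity), mul_one_div]
  have hvalue : (2 ^ p - 1) * zetaR p = 2 ^ p * ((1 - 2 ^ (-p)) * zetaR p) := by
    rw [← mul_assoc, mul_sub, mul_one, ← rpow_add two_pos, add_neg_cancel, rpow_zero]
  rw [hterm, hvalue]
  exact (hasSum_one_div_two_mul_add_one_rpow hp).mul_left _

section PartialSums

variable {c : ℕ → ℝ} {T : ℝ}

lemma tendsto_sum_range_add_sum_range_succ (h : HasSum c T) :
    Tendsto (fun k => ∑ d ∈ range k, c d + ∑ d ∈ range (k + 1), c d) atTop (𝓝 (2 * T)) := by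
  rw [two_mul]
  exact h.tendsto_sum_nat.add ((tendsto_add_atTop_iff_nat 1).mpr h.tendsto_sum_nat)

lemma le_sum_range_add_sum_range_succ (hc : ∀ d, 0 ≤ c d) (k : ℕ) :
    c 0 ≤ ∑ d ∈ range k, c d + ∑ d ∈ range (k + 1), c d :=
  le_add_of_nonneg_of_le (sum_nonneg fun d _ => hc d)
    (single_le_sum (fun d _ => hc d) (by simp))

lemma sum_range_lt_of_hasSum (h : HasSum c T) (hc : ∀ d, 0 < c d) (k : ℕ) :
    ∑ d ∈ range k, c d < T :=
  calc ∑ d ∈ range k, c d < ∑ d ∈ range (k + 1), c d := by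
        rw [sum_range_succ]
        exact lt_add_of_pos_right _ (hc k)
    _ ≤ T := sum_le_hasSum _ (fun d _ => (hc d).le) h

lemma sum_range_add_sum_range_succ_lt (h : HasSum c T) (hc : ∀ d, 0 < c d) (k : ℕ) :
    ∑ d ∈ range k, c d + ∑ d ∈ range (k + 1), c d < 2 * T := by
  rw [two_mul]
  exact add_lt_add (sum_range_lt_of_hasSum h hc k) (sum_range_lt_of_hasSum h hc (k + 1))

end PartialSums

theorem stmt_3 (p : ℝ) (hp : 1 < p) :
    Tendsto (fun n : ℕ => (n : ℝ) ^ (-(1 / p)) * lpNorm n p) atTop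
      (nhds (2 ^ (1 / p) * ((2 ^ p - 1) * zetaR p) ^ (1 / p))) ∧
    ∀ n : ℕ, 1 ≤ n →
      2 ≤ (n : ℝ) ^ (-(1 / p)) * lpNorm n p ∧
      (n : ℝ) ^ (-(1 / p)) * lpNorm n p < 2 ^ (1 / p) * ((2 ^ p - 1) * zetaR p) ^ (1 / p) := by
  have hT := hasSum_cauchyWeight hp
  have hpos := cauchyWeight_pos p
  have hp' : 0 < 1 / p := by positivity
  have hbelow := le_sum_range_add_sum_range_succ fun d => (hpos d).le
  have habove := sum_range_add_sum_range_succ_lt hT hpos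
  rw [← mul_rpow two_pos.le (hT.nonneg fun d => (hpos d).le)]
  simp only [rpow_neg_one_div_mul_lpNorm]
  refine ⟨?_, fun n hn => ⟨?_, ?_⟩⟩
  · refine ((tendsto_sum_range_add_sum_range_succ hT).cesaro.rpow_const (.inr hp'.le)).congr
      fun n => ?_
    rw [expect_eq_sum_div_card, card_range, inv_mul_eq_div]
  · calc (2 : ℝ) = cauchyWeight p 0 ^ (1 / p) := by
          rw [cauchyWeight_zero, one_div, rpow_rpow_inv two_pos.le (by positivity)]
      _ ≤ _ := rpow_le_rpow (hpos 0).le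
          (le_expect (nonempty_range_iff.mpr (by omega)) fun k _ => hbelow k) hp'.le
  · exact rpow_lt_rpow (expect_nonneg fun k _ => (hpos 0).le.trans (hbelow k))
      (expect_lt (fun k _ => (habove k).le) ⟨0, mem_range.mpr hn, habove 0⟩) hp'
end

section
/- Let p > 1 and n ≥ 1. Then (1 − 2^{−p}) ζ(p) − 1/(2^p (p − 1) n^{p−1}) ≤ Σ_{k=1}^{n} 1/(2k − 1)^p < (1 − 2^{−p}) ζ(p) − 1/(2 (p − 1)(2n + 1)^{p−1}). -/
open Finset Real Filter

/-!
Write `(1 - 2 ^ (-p)) ζ(p) = ∑_{k ≥ 0} (2k+1)^(-p)` and split off the partial sum, so that both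
bounds are bounds on the tail `∑_{k ≥ n} (2k+1)^(-p)`. Each term is compared with half the
integral of `x ^ (-p)` over an interval of length 2: over `[2k, 2k+2]` the integral dominates
`2 (2k+1)^(-p)` because `x ^ (-p)` lies above its tangent line at the midpoint, and over
`[2k+1, 2k+3]` it is strictly smaller than `2 (2k+1)^(-p)` because `x ^ (-p)` is decreasing.
Summing, the integrals telescope to `(2n)^(1-p) / (2(p-1))` and `(2n+1)^(1-p) / (2(p-1))`.
-/

open Topology

section

variable {p : ℝ}

lemma zetaR_eq_tsum (hp : 1 < p) : zetaR p = ∑' n : ℕ, (n : ℝ) ^ (-p) := by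
  rw [zetaR, zeta_eq_tsum_one_div_nat_cpow (by simpa using hp)]
  have hterm (n : ℕ) : 1 / (n : ℂ) ^ (p : ℂ) = (((n : ℝ) ^ (-p) : ℝ) : ℂ) := by
    rw [Complex.ofReal_cpow n.cast_nonneg, Complex.ofReal_neg, Complex.cpow_neg, one_div,
      Complex.ofReal_natCast]
  simp_rw [hterm, ← Complex.ofReal_tsum, Complex.ofReal_re]

lemma summable_rpow_neg_comp (hp : 1 < p) {g : ℕ → ℕ} (hg : Function.Injective g) :
    Summable fun k => (g k : ℝ) ^ (-p) :=
  (Real.summable_nat_rpow.mpr (by linarith)).comp_injective hg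

lemma summable_rpow_neg_odd (hp : 1 < p) :
    Summable fun k : ℕ => ((2 * k + 1 : ℕ) : ℝ) ^ (-p) :=
  summable_rpow_neg_comp hp (g := fun k => 2 * k + 1) fun a b h => by simpa using h

lemma tsum_rpow_neg_odd (hp : 1 < p) :
    ∑' k : ℕ, ((2 * k + 1 : ℕ) : ℝ) ^ (-p) = (1 - 2 ^ (-p)) * zetaR p := by
  have heven : ∑' k : ℕ, ((2 * k : ℕ) : ℝ) ^ (-p) = 2 ^ (-p) * zetaR p := by
    rw [zetaR_eq_tsum hp, ← tsum_mul_left]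
    congr 1 with k
    rw [Nat.cast_mul, Nat.cast_ofNat, mul_rpow zero_le_two k.cast_nonneg]
  have hsplit := tsum_even_add_odd (f := fun n : ℕ => (n : ℝ) ^ (-p))
    (summable_rpow_neg_comp hp (g := fun k => 2 * k) fun a b h => by simpa using h)
    (summable_rpow_neg_odd hp)
  rw [heven, ← zetaR_eq_tsum hp] at hsplit
  linarith

lemma zero_notMem_uIcc_of_pos {a b : ℝ} (ha : 0 < a) (hb : 0 < b) : (0 : ℝ) ∉ Set.uIcc a b :=
  fun h => by rcases Set.mem_uIcc.mp h with h | h <;> linarith [h.1]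

lemma integral_rpow_neg {a b : ℝ} (hp : p ≠ 1) (ha : 0 < a) (hb : 0 < b) :
    ∫ x in a..b, x ^ (-p) = (a ^ (1 - p) - b ^ (1 - p)) / (p - 1) := by
  rw [integral_rpow (Or.inr ⟨fun h => hp (by linarith), zero_notMem_uIcc_of_pos ha hb⟩),
    neg_add_eq_sub, ← neg_sub p 1, div_neg, ← neg_div, neg_sub]

lemma one_sub_mul_sub_one_le_rpow_neg (hp : 1 ≤ p) {u : ℝ} (hu : 0 < u) :
    1 - p * (u - 1) ≤ u ^ (-p) := by
  have hB := one_add_mul_self_le_rpow_one_add (show -1 ≤ u⁻¹ - 1 by linarith [inv_pos.2 hu]) hp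
  rw [add_sub_cancel, inv_rpow hu.le, ← rpow_neg hu.le] at hB
  have hAMGM : u⁻¹ - 1 - (1 - u) = (u - 1) ^ 2 / u := by field_simp; ring
  nlinarith [div_nonneg (sq_nonneg (u - 1)) hu.le]

lemma rpow_neg_tangent_le (hp : 1 ≤ p) {m x : ℝ} (hm : 0 < m) (hx : 0 < x) :
    m ^ (-p) * (1 - p * (x - m) / m) ≤ x ^ (-p) := by
  have h := one_sub_mul_sub_one_le_rpow_neg hp (div_pos hx hm)
  rw [div_rpow hx.le hm.le, le_div_iff₀ (rpow_pos_of_pos hm _)] at h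
  calc m ^ (-p) * (1 - p * (x - m) / m) = (1 - p * (x / m - 1)) * m ^ (-p) := by
        field_simp
    _ ≤ x ^ (-p) := h

lemma two_mul_rpow_neg_le_integral (hp : 1 ≤ p) {a : ℝ} (ha : 0 < a) :
    2 * (a + 1) ^ (-p) ≤ ∫ x in a..a + 2, x ^ (-p) := by
  set m := a + 1
  have htangent : ∫ x in a..a + 2, m ^ (-p) * (1 - p * (x - m) / m) = 2 * m ^ (-p) := by
    rw [intervalIntegral.integral_const_mul, intervalIntegral.integral_sub
      intervalIntegrable_const (Continuous.intervalIntegrable (by fun_prop) _ _)]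
    simp only [intervalIntegral.integral_const, intervalIntegral.integral_div,
      intervalIntegral.integral_const_mul, intervalIntegral.integral_sub,
      intervalIntegral.intervalIntegrable_id, intervalIntegrable_const, integral_id,
      add_sub_cancel_left, smul_eq_mul, mul_one]
    ring
  rw [← htangent]
  refine intervalIntegral.integral_mono_on (by linarith)
    (Continuous.intervalIntegrable (by fun_prop) _ _)
    (intervalIntegral.intervalIntegrable_rpow (Or.inr (zero_notMem_uIcc_of_pos ha (by linarith))))
    fun x hx => rpow_neg_tangent_le hp (by positivity) (by linarith [hx.1])

lemma integral_rpow_neg_lt_two_mul (hp : 0 < p) {a : ℝ} (ha : 0 < a) :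
    ∫ x in a..a + 2, x ^ (-p) < 2 * a ^ (-p) := by
  have hlt := intervalIntegral.integral_lt_integral_of_continuousOn_of_le_of_exists_lt
    (f := fun x => x ^ (-p)) (g := fun _ => a ^ (-p)) (by linarith : a < a + 2)
    (fun x hx => (continuousAt_rpow_const _ _
      (Or.inl (by linarith [hx.1] : x ≠ 0))).continuousWithinAt)
    continuousOn_const
    (fun x hx => rpow_le_rpow_of_nonpos ha hx.1.le (by linarith))
    ⟨a + 2, by simp, rpow_lt_rpow_of_neg ha (by linarith) (by linarith)⟩
  simpa using hlt

lemma hasSum_sub_succ_of_antitone {G : ℕ → ℝ} (hG : Antitone G)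
    (hlim : Tendsto G atTop (𝓝 0)) : HasSum (fun k => G k - G (k + 1)) (G 0) := by
  rw [hasSum_iff_tendsto_nat_of_nonneg (fun k => sub_nonneg.2 (hG k.le_succ))]
  simp_rw [Finset.sum_range_sub']
  simpa using tendsto_const_nhds.sub hlim

lemma hasSum_integral_rpow_neg (hp : 1 < p) {c : ℝ} (hc : 0 < c) :
    HasSum (fun k : ℕ => ∫ x in c + 2 * k..c + 2 * k + 2, x ^ (-p))
      (c ^ (1 - p) / (p - 1)) := by
  set G : ℕ → ℝ := fun k => (c + 2 * k) ^ (1 - p) / (p - 1)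
  have hG : Antitone G := antitone_nat_of_succ_le fun k => by
    simp only [G]; push_cast
    exact div_le_div_of_nonneg_right
      (rpow_le_rpow_of_nonpos (by positivity) (by linarith) (by linarith)) (by linarith)
  have hlim : Tendsto G atTop (𝓝 0) := by
    have h := (tendsto_rpow_neg_atTop (sub_pos.2 hp)).comp
      (tendsto_atTop_add_const_left _ c
        (tendsto_natCast_atTop_atTop.const_mul_atTop two_pos))
    simpa [G, neg_sub] using h.div_const (p - 1)
  convert hasSum_sub_succ_of_antitone hG hlim using 1
  · ext k
    rw [integral_rpow_neg hp.ne' (by positivity) (by positivity), ← sub_div]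
    push_cast; ring_nf
  · simp [G]

lemma tsum_rpow_neg_odd_tail_le (hp : 1 < p) {n : ℕ} (hn : 1 ≤ n) :
    ∑' k : ℕ, ((2 * (k + n) + 1 : ℕ) : ℝ) ^ (-p) ≤
      (2 * n : ℝ) ^ (1 - p) / (2 * (p - 1)) := by
  have hsum := (hasSum_integral_rpow_neg hp (c := 2 * n) (by positivity)).div_const 2
  rw [div_div, mul_comm (p - 1)] at hsum
  refine hasSum_le (fun k => ?_) ((summable_rpow_neg_odd hp).comp_injective
    (add_left_injective n)).hasSum hsum
  have h := two_mul_rpow_neg_le_integral hp.le (a := 2 * n + 2 * k) (by positivity)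
  have hcast : ((2 * (k + n) + 1 : ℕ) : ℝ) = 2 * n + 2 * k + 1 := by push_cast; ring
  simp only [Function.comp_apply, hcast]
  linarith

lemma lt_tsum_rpow_neg_odd_tail (hp : 1 < p) (n : ℕ) :
    (2 * n + 1 : ℝ) ^ (1 - p) / (2 * (p - 1)) <
      ∑' k : ℕ, ((2 * (k + n) + 1 : ℕ) : ℝ) ^ (-p) := by
  have hsum := (hasSum_integral_rpow_neg hp (c := 2 * n + 1) (by positivity)).div_const 2
  rw [div_div, mul_comm (p - 1)] at hsum
  have hterm (k : ℕ) : (∫ x in 2 * n + 1 + 2 * k..2 * n + 1 + 2 * k + 2, x ^ (-p)) / 2 <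
      ((2 * (k + n) + 1 : ℕ) : ℝ) ^ (-p) := by
    have h := integral_rpow_neg_lt_two_mul (by linarith) (a := 2 * n + 1 + 2 * k) (by positivity)
    have hcast : ((2 * (k + n) + 1 : ℕ) : ℝ) = 2 * n + 1 + 2 * k := by push_cast; ring
    rw [hcast]
    linarith
  exact hasSum_lt (fun k => (hterm k).le) (hterm 0) hsum
    ((summable_rpow_neg_odd hp).comp_injective (add_left_injective n)).hasSum

end

theorem stmt_19 (p : ℝ) (hp : 1 < p) (n : ℕ) (hn : 1 ≤ n) :
    (1 - 2 ^ (-p)) * zetaR p - 1 / (2 ^ p * (p - 1) * (n : ℝ) ^ (p - 1)) ≤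
      ∑ k ∈ Finset.Icc 1 n, 1 / (2 * (k : ℝ) - 1) ^ p ∧
    ∑ k ∈ Finset.Icc 1 n, 1 / (2 * (k : ℝ) - 1) ^ p <
      (1 - 2 ^ (-p)) * zetaR p - 1 / (2 * (p - 1) * (2 * (n : ℝ) + 1) ^ (p - 1)) := by
  have hpartial : ∑ k ∈ Finset.Icc 1 n, 1 / (2 * (k : ℝ) - 1) ^ p =
      ∑ j ∈ range n, ((2 * j + 1 : ℕ) : ℝ) ^ (-p) := by
    rw [← Ico_add_one_right_eq_Icc, sum_Ico_eq_sum_range, add_tsub_cancel_right]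
    refine sum_congr rfl fun j _ => ?_
    rw [rpow_neg (by positivity), one_div]
    push_cast; ring_nf
  have hsplit := (summable_rpow_neg_odd hp).sum_add_tsum_nat_add n
  rw [tsum_rpow_neg_odd hp] at hsplit
  have hn0 : (0 : ℝ) < n := by exact_mod_cast hn
  have hupper_eq :
      (2 * n : ℝ) ^ (1 - p) / (2 * (p - 1)) = 1 / (2 ^ p * (p - 1) * n ^ (p - 1)) := by
    rw [mul_rpow zero_le_two hn0.le, ← neg_sub p 1, rpow_neg zero_le_two, rpow_neg hn0.le,
      rpow_sub_one two_ne_zero]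
    field_simp
  have hlower_eq : (2 * n + 1 : ℝ) ^ (1 - p) / (2 * (p - 1)) =
      1 / (2 * (p - 1) * (2 * n + 1) ^ (p - 1)) := by
    rw [← neg_sub p 1, rpow_neg (by positivity)]
    field_simp
  rw [hpartial]
  constructor
  · linarith [hupper_eq ▸ tsum_rpow_neg_odd_tail_le hp hn]
  · linarith [hlower_eq ▸ lt_tsum_rpow_neg_odd_tail hp n]
end
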